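/- arXiv:1401.0830 — 2 statements merged into one kernel-verified Lean document; each statement's English description precedes it below -/
import Mathlib

section
/- Let H = p1^2 + p2^2, J = x*p2 - y*p1, L1 = J^2, L2 = p1^2 be functions of (x, y, p1, p2), and let R = {L1, L2} be the canonical Poisson bracket. Then R^2 = 16 * L1 * L2 * (H - L2). -/
/-! Since L2 = p1^2 depends on p1 alone, {L1, L2} = -2 p1 ∂L1/∂x = -4 p1 p2 J;
its square is 16 J^2 p1^2 p2^2, and H - L2 = p2^2. -/

/-- Canonical Poisson bracket on phase space (x, y, p1, p2):
{F, G} = F_{p1} G_x + F_{p2} G_y - G_{p1} F_x - G_{p2} F_y. -/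
noncomputable def poissonBracket (F G : ℝ → ℝ → ℝ → ℝ → ℝ) (x y p1 p2 : ℝ) : ℝ :=
    deriv (fun t => F x y t p2) p1 * deriv (fun t => G t y p1 p2) x
  + deriv (fun t => F x y p1 t) p2 * deriv (fun t => G x t p1 p2) y
  - deriv (fun t => G x y t p2) p1 * deriv (fun t => F t y p1 p2) x
  - deriv (fun t => G x y p1 t) p2 * deriv (fun t => F x t p1 p2) y

noncomputable def Hf : ℝ → ℝ → ℝ → ℝ → ℝ := fun _ _ p1 p2 => p1^2 + p2^2
noncomputable def L1f : ℝ → ℝ → ℝ → ℝ → ℝ := fun x y p1 p2 => (x*p2 - y*p1)^2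
noncomputable def L2f : ℝ → ℝ → ℝ → ℝ → ℝ := fun _ _ p1 _ => p1^2

theorem poissonBracket_of_fun_p1 (F : ℝ → ℝ → ℝ → ℝ → ℝ) (g : ℝ → ℝ) (x y p1 p2 : ℝ) :
    poissonBracket F (fun _ _ p1 _ => g p1) x y p1 p2 =
      -(deriv g p1 * deriv (fun t => F t y p1 p2) x) := by
  simp [poissonBracket]

theorem deriv_L1f_x (x y p1 p2 : ℝ) :
    deriv (fun t => L1f t y p1 p2) x = 2 * (x * p2 - y * p1) * p2 := by
  simp [L1f]

theorem poissonBracket_L1f_L2f (x y p1 p2 : ℝ) :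
    poissonBracket L1f L2f x y p1 p2 = -4 * p1 * p2 * (x * p2 - y * p1) := by
  rw [show L2f = fun _ _ p1 _ => (fun t : ℝ => t ^ 2) p1 from rfl, poissonBracket_of_fun_p1,
    deriv_L1f_x]
  simp only [deriv_pow_field]
  ring

theorem E1_free_casimir (x y p1 p2 : ℝ) :
    (poissonBracket L1f L2f x y p1 p2)^2 =
      16 * L1f x y p1 p2 * L2f x y p1 p2 * (Hf x y p1 p2 - L2f x y p1 p2) := by
  rw [poissonBracket_L1f_L2f]
  simp only [Hf, L1f, L2f]
  ring
end

section
/- Let H = J1^2 + J2^2 + J3^2 + a3/s3^2, X = J3, L1 = J1^2 + a3*s2^2/s3^2, L2 = J1*J2 - a3*s1*s2/s3^2, with J1 = s2 p3 - s3 p2 etc. Then, subject to s1^2 + s2^2 + s3^2 = 1 and s1 p1 + s2 p2 + s3 p3 = 0, the Casimir identity L1^2 + L2^2 - L1*H + L1*X^2 + a3*X^2 + a3*L1 = 0 holds. -/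
/-!
Writing `c = a3 / s3^2`, so that `a3 = c s3^2`, the Casimir becomes a polynomial in `c`, `s` and
`J = s × p`. Modulo `|s|^2 = 1` it equals `c (s3^2 J3^2 - (s1 J1 + s2 J2)^2)`, which vanishes because
`J` is orthogonal to `s`.
-/

theorem casimir_eq_zero_of_orthogonal {R : Type*} [CommRing R] (c s1 s2 s3 J1 J2 J3 : R)
    (hsphere : s1^2 + s2^2 + s3^2 = 1) (horth : s1*J1 + s2*J2 + s3*J3 = 0) :
    (J1^2 + c*s2^2)^2 + (J1*J2 - c*s1*s2)^2 - (J1^2 + c*s2^2)*(J1^2 + J2^2 + J3^2 + c)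
      + (J1^2 + c*s2^2)*J3^2 + c*s3^2*J3^2 + c*s3^2*(J1^2 + c*s2^2) = 0 := by
  linear_combination (c*(J1^2 + c*s2^2)) * hsphere - c*(s1*J1 + s2*J2 - s3*J3) * horth

theorem S3_casimir_general (a3 : ℝ) (s1 s2 s3 p1 p2 p3 : ℝ)
    (h3 : s3 ≠ 0)
    (hsphere : s1^2 + s2^2 + s3^2 = 1) :
    let J1 := s2*p3 - s3*p2
    let J2 := s3*p1 - s1*p3
    let J3 := s1*p2 - s2*p1
    let H := J1^2 + J2^2 + J3^2 + a3/s3^2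
    let X := J3
    let L1 := J1^2 + a3*s2^2/s3^2
    let L2 := J1*J2 - a3*s1*s2/s3^2
    L1^2 + L2^2 - L1*H + L1*X^2 + a3*X^2 + a3*L1 = 0 := by
  intro J1 J2 J3 H X L1 L2
  have ha3 : a3 = a3 / s3^2 * s3^2 := (div_mul_cancel₀ a3 (pow_ne_zero 2 h3)).symm
  have hcasimir := casimir_eq_zero_of_orthogonal (a3 / s3^2) s1 s2 s3 J1 J2 J3 hsphere
    (by simp only [J1, J2, J3]; ring)
  linear_combination hcasimir + (X^2 + L1) * ha3

theorem S3_casimir (a3 : ℝ) (s1 s2 s3 p1 p2 p3 : ℝ)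
    (h3 : s3 ≠ 0)
    (hsphere : s1^2 + s2^2 + s3^2 = 1)
    (htangent : s1*p1 + s2*p2 + s3*p3 = 0) :
    let J1 := s2*p3 - s3*p2
    let J2 := s3*p1 - s1*p3
    let J3 := s1*p2 - s2*p1
    let H := J1^2 + J2^2 + J3^2 + a3/s3^2
    let X := J3
    let L1 := J1^2 + a3*s2^2/s3^2
    let L2 := J1*J2 - a3*s1*s2/s3^2
    L1^2 + L2^2 - L1*H + L1*X^2 + a3*X^2 + a3*L1 = 0 :=
  S3_casimir_general a3 s1 s2 s3 p1 p2 p3 h3 hsphere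
end
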